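/- arXiv:2411.14138 — 2 statements merged into one kernel-verified Lean document; each statement's English description precedes it below -/
import Mathlib

section
/- Let F be a strictly 1-balanced graph on r ≥ 3 vertices with 1-density d_1(F), let C be a clean F-cycle of length k ≥ 2, and let G be its corresponding clean d-cycle, so that v(G) = k(r−1) and e(G) = k·e(F). Then every sub-d-graph S of G with vertex set V(G) whose edge set (usual and dummy edges together) is a proper subset of the edge set of G, i.e. with e(S) < e(G), satisfies e(S) < d_1(F) · (v(S) − c(S) + 1), where c(S) is the number of connected components of the graph formed by the vertices and usual edges of S (isolated vertices counting as components). -/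
open scoped Classical
open Filter Asymptotics

noncomputable section

/-! ### Basic graph quantities -/

/-- The number of edges of a simple graph. -/
def edgeCnt {V : Type*} (G : SimpleGraph V) : ℕ := G.edgeSet.ncard

/-- The 1-density `e(F)/(v(F)-1)` of a graph `F` on `r` vertices. -/
def d1 {r : ℕ} (F : SimpleGraph (Fin r)) : ℝ := (edgeCnt F : ℝ) / ((r : ℝ) - 1)

/-- `F` is strictly 1-balanced: every proper subgraph `S` with at least 2 vertices and at
least one edge satisfies `d₁(S) < d₁(F)`. -/
def Strictly1Balanced {r : ℕ} (F : SimpleGraph (Fin r)) : Prop :=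
  ∀ S : F.Subgraph, S ≠ ⊤ → 2 ≤ S.verts.ncard → 1 ≤ S.edgeSet.ncard →
    (S.edgeSet.ncard : ℝ) / ((S.verts.ncard : ℝ) - 1) < d1 F

/-- The number of automorphisms of `F`. -/
def autCard {r : ℕ} (F : SimpleGraph (Fin r)) : ℕ := Nat.card (F ≃g F)

/-! ### Copies of `F` in a graph, `F`-factors, `F`-isolated vertices -/

/-- `φ` is a copy of `F` in `G` (an embedding of `F` as a not necessarily induced subgraph). -/
def IsCopyIn {r n : ℕ} (F : SimpleGraph (Fin r)) (G : SimpleGraph (Fin n))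
    (φ : Fin r ↪ Fin n) : Prop :=
  ∀ u v, F.Adj u v → G.Adj (φ u) (φ v)

/-- `G` contains an `F`-factor: pairwise vertex-disjoint copies of `F` covering all vertices. -/
def HasFFactor {r n : ℕ} (F : SimpleGraph (Fin r)) (G : SimpleGraph (Fin n)) : Prop :=
  ∃ Φ : Finset (Fin r ↪ Fin n),
    (∀ φ ∈ Φ, IsCopyIn F G φ) ∧
    (∀ φ ∈ Φ, ∀ ψ ∈ Φ, φ ≠ ψ → ∀ x : Fin n, ¬(x ∈ Set.range φ ∧ x ∈ Set.range ψ)) ∧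
    (∀ x : Fin n, ∃ φ ∈ Φ, x ∈ Set.range φ)

/-- Vertex `x` is `F`-isolated in `G`: no copy of `F` in `G` contains `x`. -/
def FIsolated {r n : ℕ} (F : SimpleGraph (Fin r)) (G : SimpleGraph (Fin n)) (x : Fin n) : Prop :=
  ∀ φ : Fin r ↪ Fin n, IsCopyIn F G φ → x ∉ Set.range φ

/-! ### The random graph `G(n,p)` -/

/-- Probability of the event `P` in the Erdős–Rényi random graph `G(n,p)`. -/
def gnpProb (n : ℕ) (p : ℝ) (P : SimpleGraph (Fin n) → Prop) : ℝ :=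
  ∑ G : SimpleGraph (Fin n),
    if P G then p ^ edgeCnt G * (1 - p) ^ (n.choose 2 - edgeCnt G) else 0

/-- The sharp threshold `p* = ((aut F / r!) · ln n / C(n-1, r-1))^(1/e(F))`. -/
def pstar {r : ℕ} (F : SimpleGraph (Fin r)) (n : ℕ) : ℝ :=
  ((autCard F : ℝ) / (r.factorial : ℝ) * Real.log n / ((n - 1).choose (r - 1) : ℝ)) ^
    ((1 : ℝ) / (edgeCnt F : ℝ))

/-! ### `F`-edges and `F`-graphs -/

/-- An `F`-edge: a pair (vertex set, edge set); the copies of `F` among these are singled out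
by `FEdge.IsCopyOf`. -/
abbrev FEdge (V : Type*) := Finset V × Finset (Sym2 V)

/-- `h` is a copy of `F` with vertices in `V`. -/
def FEdge.IsCopyOf {r : ℕ} {V : Type*} (h : FEdge V) (F : SimpleGraph (Fin r)) : Prop :=
  ∃ φ : Fin r → V, Function.Injective φ ∧ (↑h.1 : Set V) = Set.range φ ∧
    (↑h.2 : Set (Sym2 V)) = Sym2.map φ '' F.edgeSet

/-- An `F`-graph: a vertex set together with a set of `F`-edges. -/
abbrev FGraph (V : Type*) := Finset V × Finset (FEdge V)

/-- Well-formedness of an `F`-graph w.r.t. `F`: every `F`-edge is a copy of `F` with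
vertices inside the vertex set. -/
def FGraph.Wf {r : ℕ} {V : Type*} (H : FGraph V) (F : SimpleGraph (Fin r)) : Prop :=
  ∀ h ∈ H.2, FEdge.IsCopyOf h F ∧ h.1 ⊆ H.1

/-- The edge set of the shadow graph of an `F`-graph. -/
def shadowEdges {V : Type*} [DecidableEq V] (H : FGraph V) : Finset (Sym2 V) :=
  H.2.sup Prod.snd

/-- The shadow graph of an `F`-graph. -/
def shadow {V : Type*} [DecidableEq V] (H : FGraph V) : SimpleGraph V :=
  SimpleGraph.fromEdgeSet ↑(shadowEdges H)

/-- Number of connected components of the shadow graph of `H` (on the vertex set of `H`). -/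
def compCount {V : Type*} [DecidableEq V] (H : FGraph V) : ℕ :=
  Nat.card ((shadow H).induce (↑H.1 : Set V)).ConnectedComponent

/-- An `F`-graph is connected if its shadow graph is. -/
def FGraphConnected {V : Type*} [DecidableEq V] (H : FGraph V) : Prop :=
  ((shadow H).induce (↑H.1 : Set V)).Connected

/-- The nullity `n(H) = (r-1)e(H) + c(H) - v(H)` of an `F`-graph. -/
def nullity (r : ℕ) {V : Type*} [DecidableEq V] (H : FGraph V) : ℤ :=
  ((r : ℤ) - 1) * H.2.card + compCount H - H.1.card

/-- An avoidable configuration: a connected `F`-graph of nullity at least 2. -/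
def Avoidable {r : ℕ} {V : Type*} [DecidableEq V] (F : SimpleGraph (Fin r))
    (H : FGraph V) : Prop :=
  FGraph.Wf H F ∧ FGraphConnected H ∧ 2 ≤ nullity r H

/-- The `F`-edge `h` is induced by the `F`-graph `H`: it is a copy of `F`, not an `F`-edge of
`H`, but all its edges lie in the shadow graph of `H`. -/
def InducedBy {r : ℕ} {V : Type*} [DecidableEq V] (F : SimpleGraph (Fin r)) (h : FEdge V)
    (H : FGraph V) : Prop :=
  FEdge.IsCopyOf h F ∧ h ∉ H.2 ∧ h.2 ⊆ shadowEdges H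

/-- `C` is a clean `F`-cycle of length `k`. -/
def IsCleanCycleOfLen {r : ℕ} {V : Type*} [DecidableEq V] (F : SimpleGraph (Fin r))
    (C : FGraph V) (k : ℕ) : Prop :=
  FGraph.Wf C F ∧ C.1 = C.2.sup Prod.fst ∧
  ((k = 2 ∧ ∃ h₁ h₂ : FEdge V, h₁ ≠ h₂ ∧ C.2 = {h₁, h₂} ∧ (h₁.1 ∩ h₂.1).card = 2) ∨
   (3 ≤ k ∧ ∃ h : Fin k → FEdge V, Function.Injective h ∧ C.2 = Finset.image h Finset.univ ∧
     ∃ v : Fin k → V, Function.Injective v ∧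
       (∀ i j : Fin k, ((i : ℕ) + 1) % k = (j : ℕ) → (h i).1 ∩ (h j).1 = {v i}) ∧
       (∀ i j : Fin k, i ≠ j → ((i : ℕ) + 1) % k ≠ (j : ℕ) → ((j : ℕ) + 1) % k ≠ (i : ℕ) →
         (h i).1 ∩ (h j).1 = ∅)))

/-- `C` is a clean `F`-cycle (of some length `k ≥ 2`). -/
def IsCleanCycle {r : ℕ} {V : Type*} [DecidableEq V] (F : SimpleGraph (Fin r))
    (C : FGraph V) : Prop :=
  ∃ k, IsCleanCycleOfLen F C k

/-- `C` is a sparse clean `F`-cycle: a clean `F`-cycle of length 2 whose two overlap vertices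
form an edge of both of its `F`-edges. -/
def IsSparse {r : ℕ} {V : Type*} [DecidableEq V] (F : SimpleGraph (Fin r))
    (C : FGraph V) : Prop :=
  IsCleanCycleOfLen F C 2 ∧ ∃ h₁ h₂ : FEdge V, h₁ ≠ h₂ ∧ C.2 = {h₁, h₂} ∧
    ∃ x y : V, x ≠ y ∧ h₁.1 ∩ h₂.1 = {x, y} ∧ s(x, y) ∈ h₁.2 ∧ s(x, y) ∈ h₂.2

/-! ### The random `F`-graph `H_F(n,π)` -/

/-- All potential `F`-edges on the vertex set `Fin n`. -/
def allFEdges (r n : ℕ) (F : SimpleGraph (Fin r)) : Finset (FEdge (Fin n)) :=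
  Finset.univ.filter fun h => FEdge.IsCopyOf h F

/-- Expectation of `X` under the random `F`-graph `H_F(n,π)`, whose `F`-edge set is a random
subset of `allFEdges r n F`, each `F`-edge present independently with probability `π`. -/
def hfExp (r n : ℕ) (F : SimpleGraph (Fin r)) (π : ℝ)
    (X : Finset (FEdge (Fin n)) → ℝ) : ℝ :=
  ∑ S ∈ (allFEdges r n F).powerset,
    π ^ S.card * (1 - π) ^ ((allFEdges r n F).card - S.card) * X S

/-- Probability of `P` under the random `F`-graph `H_F(n,π)`. -/
def hfProb (r n : ℕ) (F : SimpleGraph (Fin r)) (π : ℝ)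
    (P : Finset (FEdge (Fin n)) → Prop) : ℝ :=
  hfExp r n F π fun S => if P S then 1 else 0

/-! ### Maps, isomorphisms and copies of `F`-graphs -/

/-- Image of an `F`-edge under a vertex map. -/
def FEdge.map {V W : Type*} [DecidableEq W] (ψ : V → W) (h : FEdge V) : FEdge W :=
  (h.1.image ψ, h.2.image (Sym2.map ψ))

/-- Image of an `F`-graph under a vertex map. -/
def FGraph.map {V W : Type*} [DecidableEq V] [DecidableEq W] (ψ : V → W)
    (H : FGraph V) : FGraph W :=
  (H.1.image ψ, H.2.image (FEdge.map ψ))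

/-- `H` is isomorphic to `K` via a vertex bijection mapping `F`-edges to `F`-edges. -/
def FGraph.IsoTo {V W : Type*} [DecidableEq V] [DecidableEq W] (H : FGraph V)
    (K : FGraph W) : Prop :=
  ∃ ψ : V → W, Set.InjOn ψ ↑H.1 ∧ FGraph.map ψ H = K

/-- The number of copies of the `F`-graph `H` among a set `S` of `F`-edges on `Fin n`. -/
def copyCount {V : Type*} [DecidableEq V] (H : FGraph V) {n : ℕ}
    (S : Finset (FEdge (Fin n))) : ℕ :=
  Nat.card {K : FGraph (Fin n) // K.2 ⊆ S ∧ FGraph.IsoTo H K}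

/-- Union of two `F`-graphs. -/
def FGraph.union {V : Type*} [DecidableEq V] (H K : FGraph V) : FGraph V :=
  (H.1 ∪ K.1, H.2 ∪ K.2)

/-! ### d-graphs and the random d-graph `G*(n,p)` -/

/-- A d-graph: vertices, usual edges, and dummy edges (identified with sparse clean
`F`-cycles). -/
abbrev DGraph (V : Type*) := Finset V × Finset (Sym2 V) × Finset (FGraph V)

/-- All potential usual edges on `Fin n`. -/
def allUsual (n : ℕ) : Finset (Sym2 (Fin n)) := Finset.univ.filter fun e => ¬e.IsDiag

/-- All potential dummy edges on `Fin n`: the sparse clean `F`-cycles. -/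
def allDummies (r n : ℕ) (F : SimpleGraph (Fin r)) : Finset (FGraph (Fin n)) :=
  Finset.univ.filter fun C => IsSparse F C

/-- Expectation of `X` under the random d-graph `G*(n,p)`: each usual edge and each dummy
edge is included independently with probability `p`. -/
def dgExp (r n : ℕ) (F : SimpleGraph (Fin r)) (p : ℝ)
    (X : Finset (Sym2 (Fin n)) → Finset (FGraph (Fin n)) → ℝ) : ℝ :=
  ∑ U ∈ (allUsual n).powerset, ∑ D ∈ (allDummies r n F).powerset,
    p ^ (U.card + D.card) *
      (1 - p) ^ (((allUsual n).card - U.card) + ((allDummies r n F).card - D.card)) * X U D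

/-- Probability of `P` under the random d-graph `G*(n,p)`. -/
def dgProb (r n : ℕ) (F : SimpleGraph (Fin r)) (p : ℝ)
    (P : Finset (Sym2 (Fin n)) → Finset (FGraph (Fin n)) → Prop) : ℝ :=
  dgExp r n F p fun U D => if P U D then 1 else 0

/-- Image of a d-graph under a vertex map. -/
def DGraph.map {V W : Type*} [DecidableEq V] [DecidableEq W] (ψ : V → W)
    (K : DGraph V) : DGraph W :=
  (K.1.image ψ, K.2.1.image (Sym2.map ψ), K.2.2.image (FGraph.map ψ))

/-- `K` is isomorphic to `L` as a d-graph. -/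
def DGraph.IsoTo {V W : Type*} [DecidableEq V] [DecidableEq W] (K : DGraph V)
    (L : DGraph W) : Prop :=
  ∃ ψ : V → W, Set.InjOn ψ ↑K.1 ∧ DGraph.map ψ K = L

/-- The number of copies of the d-graph `K` inside the d-graph on `Fin n` with usual edges
`U` and dummy edges `D`. -/
def dCopyCount {V : Type*} [DecidableEq V] (K : DGraph V) {n : ℕ}
    (U : Finset (Sym2 (Fin n))) (D : Finset (FGraph (Fin n))) : ℕ :=
  Nat.card {L : DGraph (Fin n) // L.2.1 ⊆ U ∧ L.2.2 ⊆ D ∧ DGraph.IsoTo K L}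

/-- Union of two d-graphs. -/
def DGraph.union {V : Type*} [DecidableEq V] (K L : DGraph V) : DGraph V :=
  (K.1 ∪ L.1, K.2.1 ∪ L.2.1, K.2.2 ∪ L.2.2)

/-- `G` is the clean d-cycle corresponding to the clean `F`-cycle `C`: the shadow graph of
`C` if `C` is dense, together with the dummy edge `C` if `C` is sparse. -/
def IsCleanDCycleOf {r : ℕ} {V : Type*} [DecidableEq V] (F : SimpleGraph (Fin r))
    (G : DGraph V) (C : FGraph V) : Prop :=
  (IsCleanCycle F C ∧ ¬IsSparse F C ∧ G = (C.1, shadowEdges C, (∅ : Finset (FGraph V)))) ∨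
  (IsSparse F C ∧ G = (C.1, shadowEdges C, ({C} : Finset (FGraph V))))


/-!
Write `ρ_W(U) = |W| - c(U)` for the rank of the graph with edge set `U` on the vertex set `W`.
Applied to each component, strict 1-balancedness of `F` gives `e(u) ≤ d₁(F) ρ(u)` for every set
`u` of edges of a copy of `F`, with a margin `1/(r-1)` when `u` is neither empty nor the whole
copy, and a margin `1` when `u` misses an edge of the copy whose endpoints it already joins.

Read a clean cycle starting after a copy `h` that the proper subgraph `U` does not fill. The other
copies then form a path glued at single vertices, which loses no rank, and `h` closes the cycle
through two vertices, which loses at most one unit: `ρ(U) ≥ Σ ρ(U ∩ hᵢ) - 1`. That unit is paid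
by the margin of `h`, or is not lost at all when `U` has no edge in `h`. In the sparse case the
dummy edge costs one more unit, covered by the shared edge `xy` being counted twice, by the two
margins `1` when `xy ∉ U`, or by the absence of rank loss when `U ∩ hᵢ` does not join `x` to `y`.
-/

namespace Finset

variable {α β γ : Type*} [DecidableEq β] [DecidableEq γ] {s : Finset α} {f : α → β} {g : α → γ}

lemma card_image_pair_eq_of_factor (h : ∀ a ∈ s, ∀ b ∈ s, f a = f b → g a = g b) :
    #(s.image fun a => (f a, g a)) = #(s.image f) := by
  rw [← card_image_of_injOn (f := Prod.fst), image_image]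
  · rfl
  rintro _ hp _ hq hpq
  obtain ⟨a, ha, rfl⟩ := mem_image.1 hp
  obtain ⟨b, hb, rfl⟩ := mem_image.1 hq
  exact Prod.ext hpq (h a ha b hb hpq)

lemma card_image_le_card_image_of_factor (h : ∀ a ∈ s, ∀ b ∈ s, f a = f b → g a = g b) :
    #(s.image g) ≤ #(s.image f) := by
  rw [← card_image_pair_eq_of_factor h]
  calc #(s.image g) = #((s.image fun a => (f a, g a)).image Prod.snd) := by rw [image_image]; rfl
    _ ≤ _ := card_image_le

lemma card_image_lt_card_image_of_factor (h : ∀ a ∈ s, ∀ b ∈ s, f a = f b → g a = g b)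
    {a b : α} (ha : a ∈ s) (hb : b ∈ s) (hf : f a ≠ f b) (hg : g a = g b) :
    #(s.image g) < #(s.image f) := by
  rw [← card_image_pair_eq_of_factor h]
  have hsnd : (s.image fun a => (f a, g a)).image Prod.snd = s.image g := by
    rw [image_image]; rfl
  rw [← hsnd]
  refine lt_of_le_of_ne card_image_le fun hcard => hf ?_
  have := card_image_iff.1 hcard (mem_image_of_mem _ ha) (mem_image_of_mem _ hb) hg
  exact congrArg Prod.fst this

end Finset

open Finset

namespace SimpleGraph

variable {V : Type*} {G H : SimpleGraph V} {W W₁ W₂ : Finset V}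

/-- For `W` a union of components of `G`, the number of edges of a spanning forest of `G[W]`. -/
def rankOn (G : SimpleGraph V) (W : Finset V) : ℤ := #W - #(W.image G.connectedComponentMk)

lemma rankOn_nonneg : 0 ≤ G.rankOn W := by
  simpa [rankOn] using card_image_le

lemma rankOn_le_of_card_le {n : ℕ} (h : #W ≤ n + 1) : G.rankOn W ≤ n := by
  rcases W.eq_empty_or_nonempty with rfl | hne
  · simp [rankOn]
  have : 1 ≤ #(W.image G.connectedComponentMk) := card_pos.2 (hne.image _)
  rw [rankOn]
  omega

lemma Reachable.of_forall_adj (h : ∀ a b, G.Adj a b → H.Reachable a b) {x y : V}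
    (hxy : G.Reachable x y) : H.Reachable x y := by
  obtain ⟨p⟩ := hxy
  induction p with
  | nil => rfl
  | cons hadj _ ih => exact (h _ _ hadj).trans ih

lemma rankOn_le_rankOn (h : ∀ a b, G.Adj a b → H.Reachable a b) : G.rankOn W ≤ H.rankOn W := by
  have := card_image_le_card_image_of_factor (s := W) (f := G.connectedComponentMk)
    (g := H.connectedComponentMk) fun a _ b _ hab =>
      ConnectedComponent.eq.2 ((ConnectedComponent.eq.1 hab).of_forall_adj h)
  rw [rankOn, rankOn]
  omega

lemma rankOn_add_one_le_rankOn (h : ∀ a b, G.Adj a b → H.Reachable a b) {x y : V}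
    (hx : x ∈ W) (hy : y ∈ W) (hG : ¬G.Reachable x y) (hH : H.Reachable x y) :
    G.rankOn W + 1 ≤ H.rankOn W := by
  have := card_image_lt_card_image_of_factor (s := W) (f := G.connectedComponentMk)
    (g := H.connectedComponentMk)
    (fun a _ b _ hab => ConnectedComponent.eq.2 ((ConnectedComponent.eq.1 hab).of_forall_adj h))
    hx hy (mt ConnectedComponent.eq.1 hG) (ConnectedComponent.eq.2 hH)
  rw [rankOn, rankOn]
  omega

lemma rankOn_le_rankOn_of_le (h : G ≤ H) : G.rankOn W ≤ H.rankOn W :=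
  rankOn_le_rankOn fun _ _ hab => (h hab).reachable

lemma rankOn_add_rankOn_le [DecidableEq V] :
    G.rankOn W₁ + G.rankOn W₂ ≤ G.rankOn (W₁ ∪ W₂) + G.rankOn (W₁ ∩ W₂) := by
  have himage : #((W₁ ∪ W₂).image G.connectedComponentMk) +
      #((W₁ ∩ W₂).image G.connectedComponentMk) ≤
      #(W₁.image G.connectedComponentMk) + #(W₂.image G.connectedComponentMk) := by
    rw [image_union, ← card_union_add_card_inter (W₁.image _)]
    exact Nat.add_le_add_left (card_le_card (image_inter_subset G.connectedComponentMk W₁ W₂)) _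
  have := card_union_add_card_inter W₁ W₂
  rw [rankOn, rankOn, rankOn, rankOn]
  omega

lemma rankOn_mono [DecidableEq V] (h : W₁ ⊆ W₂) : G.rankOn W₁ ≤ G.rankOn W₂ := by
  have hsup := rankOn_add_rankOn_le (G := G) (W₁ := W₁) (W₂ := W₂ \ W₁)
  rw [union_sdiff_of_subset h, inter_sdiff_self] at hsup
  have h0 : G.rankOn ∅ ≤ 0 := rankOn_le_of_card_le (by simp)
  linarith [rankOn_nonneg (G := G) (W := W₂ \ W₁)]

lemma rankOn_add_rankOn_pair_le [DecidableEq V] (h : G ≤ H) {x y : V} (hx : x ∈ W) (hy : y ∈ W)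
    (hG : ¬G.Reachable x y) : G.rankOn W + H.rankOn {x, y} ≤ H.rankOn W := by
  by_cases hH : H.Reachable x y
  · have := rankOn_add_one_le_rankOn (fun _ _ hab => (h hab).reachable) hx hy hG hH
    have hpair : H.rankOn {x, y} ≤ 1 := rankOn_le_of_card_le (card_le_two)
    omega
  · have hxy : x ≠ y := fun hxy => hH (hxy ▸ Reachable.refl x)
    have hpair : H.rankOn {x, y} = 0 := by
      rw [rankOn, image_insert, image_singleton,
        card_pair (mt ConnectedComponent.eq.1 hH), card_pair hxy]
      rfl
    linarith [rankOn_le_rankOn_of_le h (W := W)]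

lemma rankOn_add_rankOn_le_union_add_one [DecidableEq V] {G₁ G₂ : SimpleGraph V} (h₁ : G₁ ≤ H)
    (h₂ : G₂ ≤ H) (hover : #(W₁ ∩ W₂) ≤ 2) :
    G₁.rankOn W₁ + G₂.rankOn W₂ ≤ H.rankOn (W₁ ∪ W₂) + 1 := by
  have hT : H.rankOn (W₁ ∩ W₂) ≤ 1 := by exact_mod_cast rankOn_le_of_card_le hover
  linarith [rankOn_add_rankOn_le (G := H) (W₁ := W₁) (W₂ := W₂),
    rankOn_le_rankOn_of_le h₁ (W := W₁), rankOn_le_rankOn_of_le h₂ (W := W₂)]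

lemma rankOn_add_rankOn_le_union [DecidableEq V] {G₁ G₂ : SimpleGraph V} (h₁ : G₁ ≤ H)
    (h₂ : G₂ ≤ H) {x y : V} (hover : W₁ ∩ W₂ = {x, y})
    (hR : ¬G₁.Reachable x y ∨ ¬G₂.Reachable x y) :
    G₁.rankOn W₁ + G₂.rankOn W₂ ≤ H.rankOn (W₁ ∪ W₂) := by
  have hx : x ∈ W₁ ∩ W₂ := hover ▸ mem_insert_self x {y}
  have hy : y ∈ W₁ ∩ W₂ := hover ▸ mem_insert_of_mem (mem_singleton_self y)
  have hsup := rankOn_add_rankOn_le (G := H) (W₁ := W₁) (W₂ := W₂)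
  rw [hover] at hsup
  rcases hR with hR | hR
  · linarith [rankOn_add_rankOn_pair_le h₁ (mem_inter.1 hx).1 (mem_inter.1 hy).1 hR,
      rankOn_le_rankOn_of_le h₂ (W := W₂)]
  · linarith [rankOn_add_rankOn_pair_le h₂ (mem_inter.1 hx).2 (mem_inter.1 hy).2 hR,
      rankOn_le_rankOn_of_le h₁ (W := W₁)]

lemma sum_rankOn_le_rankOn_biUnion [DecidableEq V] (S : ℕ → Finset V) (n : ℕ)
    (h : ∀ m < n, #((range m).biUnion S ∩ S m) ≤ 1) :
    ∑ m ∈ range n, G.rankOn (S m) ≤ G.rankOn ((range n).biUnion S) := by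
  induction n with
  | zero => simpa using rankOn_nonneg
  | succ n ih =>
    have hglue := rankOn_add_rankOn_le (G := G) (W₁ := (range n).biUnion S) (W₂ := S n)
    have hT : G.rankOn ((range n).biUnion S ∩ S n) ≤ 0 :=
      rankOn_le_of_card_le (h n n.lt_succ_self)
    rw [sum_range_succ, range_add_one, biUnion_insert, union_comm]
    linarith [ih fun m hm => h m (Nat.lt_succ_of_lt hm)]

lemma rankOn_eq_sum (G : SimpleGraph V) (W : Finset V) :
    G.rankOn W = ∑ c ∈ W.image G.connectedComponentMk,
      ((#(W.filter (G.connectedComponentMk · = c)) : ℤ) - 1) := by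
  rw [rankOn, sum_sub_distrib, ← Nat.cast_sum, ← card_eq_sum_card_image]
  simp

lemma connectedComponentMk_eq_of_mem {E : Set (Sym2 V)} {e : Sym2 V} (he : e ∈ E) {a : V}
    (ha : a ∈ e) : (fromEdgeSet E).connectedComponentMk a =
      (fromEdgeSet E).connectedComponentMk (Quot.out e).1 := by
  by_cases hout : a = (Quot.out e).1
  · rw [hout]
  have hpair : e = s(a, (Quot.out e).1) := (Sym2.mem_and_mem_iff hout).1 ⟨ha, Sym2.out_fst_mem e⟩
  exact ConnectedComponent.eq.2 (Adj.reachable ((fromEdgeSet_adj _).2 ⟨hpair ▸ he, hout⟩))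

/-- Both sides split over the components of the graph spanned by `E` that meet `W`. -/
lemma card_add_le_mul_rankOn {E : Finset (Sym2 V)} {W : Finset V}
    (hEW : ∀ e ∈ E, ∀ a ∈ e, a ∈ W) {d m : ℝ} (hd : 0 ≤ d) (hm : 0 ≤ m)
    (hloc : ∀ P ⊆ W, ∀ Q ⊆ E, Q.Nonempty → (∀ e ∈ Q, ∀ a ∈ e, a ∈ P) →
      (#Q : ℝ) + m ≤ d * (#P - 1))
    (hne : E.Nonempty) : (#E : ℝ) + m ≤ d * (fromEdgeSet (E : Set (Sym2 V))).rankOn W := by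
  set G := fromEdgeSet (E : Set (Sym2 V))
  set K := W.image G.connectedComponentMk
  set Wc := fun c => W.filter (G.connectedComponentMk · = c)
  set Ec := fun c => E.filter (fun e => G.connectedComponentMk (Quot.out e).1 = c)
  have hcomp : ∀ e ∈ E, G.connectedComponentMk (Quot.out e).1 ∈ K := fun e he =>
    mem_image_of_mem _ (hEW e he _ (Sym2.out_fst_mem e))
  have hpiece : ∀ c ∈ K, (#(Ec c) : ℝ) + (if (Ec c).Nonempty then m else 0) ≤
      d * (#(Wc c) - 1) := by
    intro c hc
    split_ifs with hEc
    · refine hloc _ (filter_subset _ _) _ (filter_subset _ _) hEc fun e he a ha => ?_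
      obtain ⟨heE, rfl⟩ := mem_filter.1 he
      exact mem_filter.2 ⟨hEW e heE a ha, connectedComponentMk_eq_of_mem (mem_coe.2 heE) ha⟩
    · obtain ⟨a, ha, rfl⟩ := mem_image.1 hc
      have hmem : a ∈ Wc (G.connectedComponentMk a) := mem_filter.2 ⟨ha, rfl⟩
      have : (1 : ℝ) ≤ #(Wc (G.connectedComponentMk a)) := by exact_mod_cast card_pos.2 ⟨a, hmem⟩
      rw [not_nonempty_iff_eq_empty.1 hEc]
      simpa using mul_nonneg hd (sub_nonneg.2 this)
  have hmargin : m ≤ ∑ c ∈ K, (if (Ec c).Nonempty then m else 0) := by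
    obtain ⟨e, he⟩ := hne
    have hEc : (Ec (G.connectedComponentMk (Quot.out e).1)).Nonempty :=
      ⟨e, mem_filter.2 ⟨he, rfl⟩⟩
    simpa [hEc] using single_le_sum (f := fun c => if (Ec c).Nonempty then m else 0)
      (fun c _ => by split_ifs <;> simp [hm]) (hcomp e he)
  calc (#E : ℝ) + m ≤ ∑ c ∈ K, ((#(Ec c) : ℝ) + (if (Ec c).Nonempty then m else 0)) := by
        rw [sum_add_distrib, card_eq_sum_card_fiberwise hcomp]
        push_cast
        linarith
    _ ≤ ∑ c ∈ K, d * ((#(Wc c) : ℝ) - 1) := sum_le_sum hpiece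
    _ = d * G.rankOn W := by rw [rankOn_eq_sum]; push_cast; rw [mul_sum]

lemma Reachable.induce_of_closed (hW : ∀ a b, G.Adj a b → a ∈ W → b ∈ W) {x y : V}
    (hx : x ∈ W) (hy : y ∈ W) (hxy : G.Reachable x y) :
    (G.induce (W : Set V)).Reachable ⟨x, hx⟩ ⟨y, hy⟩ := by
  obtain ⟨p⟩ := hxy
  induction p with
  | nil => rfl
  | @cons a b _ hab _ ih =>
    have hb : b ∈ W := hW a b hab hx
    exact (Adj.reachable (show (G.induce (W : Set V)).Adj ⟨a, hx⟩ ⟨b, hb⟩ from hab)).trans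
      (ih hb hy)

lemma card_connectedComponent_induce (hW : ∀ a b, G.Adj a b → a ∈ W → b ∈ W) :
    Nat.card (G.induce (W : Set V)).ConnectedComponent = #(W.image G.connectedComponentMk) := by
  set f := ConnectedComponent.map (Embedding.induce (G := G) (W : Set V)).toHom
  have hinj : Function.Injective f := by
    refine ConnectedComponent.ind₂ fun a b hab => ?_
    simp only [f, ConnectedComponent.map_mk, ConnectedComponent.eq] at hab
    exact ConnectedComponent.eq.2 (hab.induce_of_closed hW a.2 b.2)
  have hrange : Set.range f = ↑(W.image G.connectedComponentMk) := by
    ext κ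
    simp only [Set.mem_range, coe_image, Set.mem_image, mem_coe]
    constructor
    · rintro ⟨κ', rfl⟩
      induction κ' using ConnectedComponent.ind with
      | h a => exact ⟨a, a.2, rfl⟩
    · rintro ⟨a, ha, rfl⟩
      exact ⟨(G.induce (W : Set V)).connectedComponentMk ⟨a, ha⟩, rfl⟩
  rw [← Nat.card_range_of_injective hinj, hrange, Nat.card_coe_set_eq, Set.ncard_coe_finset]

end SimpleGraph

section Balance

variable {r : ℕ} {F : SimpleGraph (Fin r)}

lemma d1_nonneg (hr : 1 ≤ r) : 0 ≤ d1 F := by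
  have : (1 : ℝ) ≤ r := by exact_mod_cast hr
  exact div_nonneg (Nat.cast_nonneg _) (by linarith)

lemma d1_mul_sub_one (hr : 2 ≤ r) : d1 F * ((r : ℝ) - 1) = edgeCnt F := by
  have : (2 : ℝ) ≤ r := by exact_mod_cast hr
  rw [d1, div_mul_cancel₀]
  linarith

namespace Strictly1Balanced

lemma ncard_edgeSet_add_le (hF : Strictly1Balanced F) (hr : 2 ≤ r) {S : F.Subgraph}
    (hS : S ≠ ⊤) (hne : S.edgeSet.Nonempty) :
    (S.edgeSet.ncard : ℝ) + 1 / ((r : ℝ) - 1) ≤ d1 F * (S.verts.ncard - 1) := by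
  obtain ⟨e, he⟩ := hne
  induction e using Sym2.ind with | h a b => ?_
  have hab : S.Adj a b := he
  have hverts : 2 ≤ S.verts.ncard := by
    rw [← Set.ncard_pair hab.ne]
    exact Set.ncard_le_ncard (Set.insert_subset hab.fst_mem (by simpa using hab.snd_mem))
  have hedges : 1 ≤ S.edgeSet.ncard := (Set.ncard_pos).2 ⟨_, he⟩
  have hlt := hF S hS hverts hedges
  set a := S.edgeSet.ncard
  set b := S.verts.ncard
  have hr' : (0 : ℝ) < r - 1 := by
    have : (2 : ℝ) ≤ r := by exact_mod_cast hr
    linarith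
  have hb : (0 : ℝ) < b - 1 := by
    have : (2 : ℝ) ≤ b := by exact_mod_cast hverts
    linarith
  rw [d1, div_lt_div_iff₀ hb hr'] at hlt
  have hint : (a : ℤ) * ((r : ℤ) - 1) + 1 ≤ (edgeCnt F : ℤ) * ((b : ℤ) - 1) := by
    have : (a : ℤ) * ((r : ℤ) - 1) < (edgeCnt F : ℤ) * ((b : ℤ) - 1) := by exact_mod_cast hlt
    omega
  have hreal : (a : ℝ) * ((r : ℝ) - 1) + 1 ≤ edgeCnt F * ((b : ℝ) - 1) := by exact_mod_cast hint
  rw [d1, div_mul_eq_mul_div, le_div_iff₀ hr', add_mul, one_div_mul_cancel hr'.ne']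
  exact hreal

lemma ncard_edgeSet_le (hF : Strictly1Balanced F) (hr : 2 ≤ r) {S : F.Subgraph}
    (hne : S.edgeSet.Nonempty) : (S.edgeSet.ncard : ℝ) ≤ d1 F * (S.verts.ncard - 1) := by
  by_cases hS : S = ⊤
  · subst hS
    rw [SimpleGraph.Subgraph.edgeSet_top, SimpleGraph.Subgraph.verts_top, Set.ncard_univ,
      Nat.card_eq_fintype_card, Fintype.card_fin, d1_mul_sub_one hr]
    rfl
  · have hr' : (0 : ℝ) < r - 1 := by
      have : (2 : ℝ) ≤ r := by exact_mod_cast hr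
      linarith
    linarith [hF.ncard_edgeSet_add_le hr hS hne, one_div_pos.2 hr']

lemma one_lt_d1 (hF : Strictly1Balanced F) (hr : 3 ≤ r) (hE : F.edgeSet.Nonempty) :
    1 < d1 F := by
  obtain ⟨e, he⟩ := hE
  induction e using Sym2.ind with | h a b => ?_
  have hadj : F.Adj a b := he
  have hverts : (F.subgraphOfAdj hadj).verts.ncard = 2 := by
    rw [SimpleGraph.subgraphOfAdj_verts, Set.ncard_pair hadj.ne]
  have hS : F.subgraphOfAdj hadj ≠ ⊤ := by
    intro htop
    rw [htop, SimpleGraph.Subgraph.verts_top, Set.ncard_univ, Nat.card_eq_fintype_card,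
      Fintype.card_fin] at hverts
    omega
  have hmargin := hF.ncard_edgeSet_add_le (by omega) hS
    (by rw [SimpleGraph.edgeSet_subgraphOfAdj]; exact Set.singleton_nonempty _)
  rw [SimpleGraph.edgeSet_subgraphOfAdj, Set.ncard_singleton, hverts] at hmargin
  have hr' : (0 : ℝ) < r - 1 := by
    have : (3 : ℝ) ≤ r := by exact_mod_cast hr
    linarith
  have := one_div_pos.2 hr'
  push_cast at hmargin
  linarith

end Strictly1Balanced

end Balance

namespace FEdge.IsCopyOf

open SimpleGraph

variable {r : ℕ} {F : SimpleGraph (Fin r)} {V : Type*} {h : FEdge V}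

lemma mem_fst (hcopy : h.IsCopyOf F) {e : Sym2 V} (he : e ∈ h.2) {a : V} (ha : a ∈ e) :
    a ∈ h.1 := by
  obtain ⟨φ, -, h1, h2⟩ := hcopy
  obtain ⟨e₀, -, rfl⟩ : e ∈ Sym2.map φ '' F.edgeSet := by rw [← h2]; exact he
  obtain ⟨a₀, -, rfl⟩ := Sym2.mem_map.1 ha
  have : φ a₀ ∈ (h.1 : Set V) := by rw [h1]; exact Set.mem_range_self a₀
  exact this

lemma edgeSet_nonempty (hcopy : h.IsCopyOf F) (hne : h.2.Nonempty) : F.edgeSet.Nonempty := by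
  obtain ⟨φ, -, -, h2⟩ := hcopy
  obtain ⟨e, he⟩ := hne
  obtain ⟨e₀, he₀, -⟩ : e ∈ Sym2.map φ '' F.edgeSet := by rw [← h2]; exact he
  exact ⟨e₀, he₀⟩

lemma exists_subgraph (hcopy : h.IsCopyOf F) {P : Finset V} {Q : Finset (Sym2 V)}
    (hP : P ⊆ h.1) (hQ : Q ⊆ h.2) (hQP : ∀ e ∈ Q, ∀ a ∈ e, a ∈ P) :
    ∃ S : F.Subgraph, S.verts.ncard = #P ∧ S.edgeSet.ncard = #Q ∧ (S = ⊤ → Q = h.2) := by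
  obtain ⟨φ, hφ, h1, h2⟩ := hcopy
  have hmem : ∀ e ∈ h.2, e ∈ Sym2.map φ '' F.edgeSet := fun e he => by rw [← h2]; exact he
  let S : F.Subgraph :=
    { verts := φ ⁻¹' P
      Adj := fun a b => s(φ a, φ b) ∈ Q
      adj_sub := fun {a b} hab => by
        obtain ⟨e₀, he₀, heq⟩ := hmem _ (hQ hab)
        rw [← Sym2.map_mk, (Sym2.map.injective hφ).eq_iff] at heq
        rw [heq] at he₀
        exact he₀
      edge_vert := fun {a _} hab => hQP _ hab (φ a) (Sym2.mem_mk_left _ _)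
      symm := ⟨fun a b hab => by simpa only [Sym2.eq_swap] using hab⟩ }
  have hedges : S.edgeSet = Sym2.map φ ⁻¹' Q := by
    ext e
    induction e using Sym2.ind
    rfl
  refine ⟨S, ?_, ?_, fun htop => Subset.antisymm hQ fun e he => ?_⟩
  · have hPrange : (P : Set V) ⊆ Set.range φ := by rw [← h1]; exact coe_subset.2 hP
    exact (Set.ncard_preimage_of_injective_subset_range hφ hPrange).trans (Set.ncard_coe_finset P)
  · have hQrange : (Q : Set (Sym2 V)) ⊆ Set.range (Sym2.map φ) := fun e he => by
      obtain ⟨e₀, -, rfl⟩ := hmem e (hQ he)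
      exact ⟨e₀, rfl⟩
    rw [hedges, Set.ncard_preimage_of_injective_subset_range (Sym2.map.injective hφ) hQrange,
      Set.ncard_coe_finset]
  · obtain ⟨e₀, he₀, rfl⟩ := hmem e he
    have : e₀ ∈ S.edgeSet := by rw [htop]; exact he₀
    rw [hedges] at this
    exact this

lemma card_le (hF : Strictly1Balanced F) (hr : 2 ≤ r) (hcopy : h.IsCopyOf F)
    {P : Finset V} {Q : Finset (Sym2 V)} (hP : P ⊆ h.1) (hQ : Q ⊆ h.2)
    (hQP : ∀ e ∈ Q, ∀ a ∈ e, a ∈ P) (hne : Q.Nonempty) : (#Q : ℝ) ≤ d1 F * (#P - 1) := by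
  obtain ⟨S, hV, hE, -⟩ := hcopy.exists_subgraph hP hQ hQP
  have hSne : S.edgeSet.Nonempty :=
    Set.nonempty_of_ncard_ne_zero (by rw [hE]; exact hne.card_pos.ne')
  simpa only [hV, hE] using hF.ncard_edgeSet_le hr hSne

lemma card_add_le (hF : Strictly1Balanced F) (hr : 2 ≤ r) (hcopy : h.IsCopyOf F)
    {P : Finset V} {Q : Finset (Sym2 V)} (hP : P ⊆ h.1) (hQ : Q ⊆ h.2)
    (hQP : ∀ e ∈ Q, ∀ a ∈ e, a ∈ P) (hne : Q.Nonempty) (hQh : Q ≠ h.2) :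
    (#Q : ℝ) + 1 / ((r : ℝ) - 1) ≤ d1 F * (#P - 1) := by
  obtain ⟨S, hV, hE, htop⟩ := hcopy.exists_subgraph hP hQ hQP
  have hSne : S.edgeSet.Nonempty :=
    Set.nonempty_of_ncard_ne_zero (by rw [hE]; exact hne.card_pos.ne')
  simpa only [hV, hE] using hF.ncard_edgeSet_add_le hr (mt htop hQh) hSne

lemma card_le_rankOn (hF : Strictly1Balanced F) (hr : 2 ≤ r) (hcopy : h.IsCopyOf F)
    {u : Finset (Sym2 V)} (hu : u ⊆ h.2) :
    (#u : ℝ) ≤ d1 F * (fromEdgeSet (u : Set (Sym2 V))).rankOn h.1 := by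
  rcases u.eq_empty_or_nonempty with rfl | hne
  · simpa using mul_nonneg (d1_nonneg (by omega)) (Int.cast_nonneg rankOn_nonneg)
  simpa using card_add_le_mul_rankOn (fun e he a ha => hcopy.mem_fst (hu he) ha)
    (d1_nonneg (by omega)) le_rfl
    (fun P hP Q hQ hQne hQP => by simpa using hcopy.card_le hF hr hP (hQ.trans hu) hQP hQne) hne

lemma card_add_le_rankOn (hF : Strictly1Balanced F) (hr : 2 ≤ r) (hcopy : h.IsCopyOf F)
    {u : Finset (Sym2 V)} (hu : u ⊆ h.2) (hne : u.Nonempty) (huh : u ≠ h.2) :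
    (#u : ℝ) + 1 / ((r : ℝ) - 1) ≤ d1 F * (fromEdgeSet (u : Set (Sym2 V))).rankOn h.1 := by
  have hr' : (0 : ℝ) ≤ 1 / ((r : ℝ) - 1) := by
    have : (2 : ℝ) ≤ r := by exact_mod_cast hr
    exact one_div_nonneg.2 (by linarith)
  exact card_add_le_mul_rankOn (fun e he a ha => hcopy.mem_fst (hu he) ha)
    (d1_nonneg (by omega)) hr'
    (fun P hP Q hQ hQne hQP => hcopy.card_add_le hF hr hP (hQ.trans hu) hQP hQne
      fun hQeq => huh (Subset.antisymm hu (hQeq ▸ hQ))) hne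

/-- Adding `s(x, y)` to `u` does not change its rank. -/
lemma card_add_one_le_rankOn [DecidableEq V] (hF : Strictly1Balanced F) (hr : 2 ≤ r)
    (hcopy : h.IsCopyOf F) {u : Finset (Sym2 V)} (hu : u ⊆ h.2) {x y : V}
    (hxy : s(x, y) ∈ h.2) (hxyu : s(x, y) ∉ u)
    (hreach : (fromEdgeSet (u : Set (Sym2 V))).Reachable x y) :
    (#u : ℝ) + 1 ≤ d1 F * (fromEdgeSet (u : Set (Sym2 V))).rankOn h.1 := by
  have hins := hcopy.card_le_rankOn hF hr (insert_subset hxy hu)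
  have hrank : (fromEdgeSet (↑(insert s(x, y) u) : Set (Sym2 V))).rankOn h.1 ≤
      (fromEdgeSet (u : Set (Sym2 V))).rankOn h.1 := by
    refine rankOn_le_rankOn fun a b hab => ?_
    obtain ⟨hmem, hne⟩ := (fromEdgeSet_adj _).1 hab
    rcases mem_insert.1 hmem with heq | hmem
    · rcases Sym2.eq_iff.1 heq with ⟨rfl, rfl⟩ | ⟨rfl, rfl⟩
      · exact hreach
      · exact hreach.symm
    · exact Adj.reachable ((fromEdgeSet_adj _).2 ⟨hmem, hne⟩)
  rw [card_insert_of_notMem hxyu, Nat.cast_add, Nat.cast_one] at hins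
  have hrank' : ((fromEdgeSet (↑(insert s(x, y) u) : Set (Sym2 V))).rankOn h.1 : ℝ) ≤
      (fromEdgeSet (u : Set (Sym2 V))).rankOn h.1 := by exact_mod_cast hrank
  linarith [mul_le_mul_of_nonneg_left hrank' (d1_nonneg (F := F) (by omega))]

lemma card_inter_le_rankOn [DecidableEq V] (hF : Strictly1Balanced F) (hr : 2 ≤ r)
    (hcopy : h.IsCopyOf F) (U : Finset (Sym2 V)) :
    (#(U ∩ h.2) : ℝ) ≤ d1 F * (fromEdgeSet (U : Set (Sym2 V))).rankOn h.1 := by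
  refine (hcopy.card_le_rankOn hF hr inter_subset_right).trans
    (mul_le_mul_of_nonneg_left ?_ (d1_nonneg (by omega)))
  exact_mod_cast rankOn_le_rankOn_of_le (fromEdgeSet_mono (coe_subset.2 inter_subset_left))

lemma card_inter_add_le_rankOn [DecidableEq V] (hF : Strictly1Balanced F) (hr : 2 ≤ r)
    (hcopy : h.IsCopyOf F) {U : Finset (Sym2 V)} (hne : (U ∩ h.2).Nonempty)
    (hfull : U ∩ h.2 ≠ h.2) :
    (#(U ∩ h.2) : ℝ) + 1 / ((r : ℝ) - 1) ≤
      d1 F * (fromEdgeSet (U : Set (Sym2 V))).rankOn h.1 := by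
  refine (hcopy.card_add_le_rankOn hF hr inter_subset_right hne hfull).trans
    (mul_le_mul_of_nonneg_left ?_ (d1_nonneg (by omega)))
  exact_mod_cast rankOn_le_rankOn_of_le (fromEdgeSet_mono (coe_subset.2 inter_subset_left))

end FEdge.IsCopyOf

section Rotation

variable {k : ℕ}

def cycleIndex (j : Fin k) (m : ℕ) : Fin k := ⟨(j + 1 + m) % k, Nat.mod_lt _ j.pos⟩

lemma cycleIndex_eq_iff (j : Fin k) {a b : ℕ} :
    cycleIndex j a = cycleIndex j b ↔ a % k = b % k := by
  rw [cycleIndex, cycleIndex, Fin.mk.injEq]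
  exact ⟨Nat.ModEq.add_left_cancel' _, Nat.ModEq.add_left _⟩

lemma val_cycleIndex_add_one_mod (j : Fin k) (a : ℕ) :
    ((cycleIndex j a : ℕ) + 1) % k = cycleIndex j (a + 1) := by
  simp only [cycleIndex, Nat.mod_add_mod, add_assoc]

lemma cycleIndex_sub_one (j : Fin k) : cycleIndex j (k - 1) = j := by
  ext
  simp only [cycleIndex]
  rw [show (j : ℕ) + 1 + (k - 1) = j + k by have := j.pos; omega, Nat.add_mod_right,
    Nat.mod_eq_of_lt j.2]

lemma exists_cycleIndex_eq (j i : Fin k) : ∃ m < k, cycleIndex j m = i := by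
  refine ⟨(i + (k - 1 - j)) % k, Nat.mod_lt _ j.pos, Fin.ext ?_⟩
  simp only [cycleIndex]
  rw [Nat.add_mod_mod, show (j : ℕ) + 1 + (i + (k - 1 - j)) = i + k by omega, Nat.add_mod_right,
    Nat.mod_eq_of_lt i.2]

lemma biUnion_range_cycleIndex {α : Type*} [DecidableEq α] (j : Fin k) (f : Fin k → Finset α) :
    (range k).biUnion (fun m => f (cycleIndex j m)) = univ.biUnion f := by
  ext x
  simp only [mem_biUnion, mem_range, mem_univ, true_and]
  constructor
  · rintro ⟨m, -, hx⟩
    exact ⟨_, hx⟩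
  · rintro ⟨i, hx⟩
    obtain ⟨m, hm, rfl⟩ := exists_cycleIndex_eq j i
    exact ⟨m, hm, hx⟩

lemma cycleIndex_far (j : Fin k) {a b : ℕ} (hab : a < b) (hb : b < k) (hadj : a + 1 ≠ b)
    (hwrap : a = 0 → b + 1 ≠ k) :
    cycleIndex j a ≠ cycleIndex j b ∧ ((cycleIndex j a : ℕ) + 1) % k ≠ cycleIndex j b ∧
      ((cycleIndex j b : ℕ) + 1) % k ≠ cycleIndex j a := by
  simp only [val_cycleIndex_add_one_mod, ne_eq, Fin.val_inj, cycleIndex_eq_iff]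
  rw [Nat.mod_eq_of_lt (hab.trans hb), Nat.mod_eq_of_lt hb, Nat.mod_eq_of_lt (by omega : a + 1 < k)]
  refine ⟨hab.ne, hadj, fun h => ?_⟩
  rcases Nat.lt_or_ge (b + 1) k with hlt | hge
  · rw [Nat.mod_eq_of_lt hlt] at h
    omega
  · have hk : b + 1 = k := by omega
    rw [hk, Nat.mod_self] at h
    exact hwrap h.symm hk

end Rotation

section Chains

variable {α : Type*} [DecidableEq α] {S : ℕ → Finset α} {n : ℕ}

lemma card_biUnion_range_inter_le_one (hle : ∀ a b, a < b → b ≤ n → #(S a ∩ S b) ≤ 1)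
    (hempty : ∀ a b, a < b → b ≤ n → a + 1 ≠ b → (a = 0 → b ≠ n) → S a ∩ S b = ∅)
    {m : ℕ} (hm : m < n) : #((range m).biUnion S ∩ S m) ≤ 1 := by
  rcases Nat.eq_zero_or_pos m with rfl | hpos
  · simp
  refine (card_le_card fun z hz => ?_).trans (hle (m - 1) m (by omega) hm.le)
  obtain ⟨hzU, hzm⟩ := mem_inter.1 hz
  obtain ⟨i, hi, hzi⟩ := mem_biUnion.1 hzU
  have hi : i < m := mem_range.1 hi
  by_cases hadj : i + 1 = m
  · exact mem_inter.2 ⟨(show i = m - 1 by omega) ▸ hzi, hzm⟩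
  · have := hempty i m hi hm.le hadj fun _ => hm.ne
    exact absurd (mem_inter.2 ⟨hzi, hzm⟩) (this ▸ notMem_empty z)

lemma card_biUnion_range_inter_le_two (hle : ∀ a b, a < b → b ≤ n → #(S a ∩ S b) ≤ 1)
    (hempty : ∀ a b, a < b → b ≤ n → a + 1 ≠ b → (a = 0 → b ≠ n) → S a ∩ S b = ∅) :
    #((range n).biUnion S ∩ S n) ≤ 2 := by
  rcases Nat.eq_zero_or_pos n with rfl | hpos
  · simp
  refine (card_le_card (t := (S (n - 1) ∩ S n) ∪ (S 0 ∩ S n)) fun z hz => ?_).trans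
    ((card_union_le _ _).trans (Nat.add_le_add (hle _ _ (by omega) le_rfl) (hle _ _ hpos le_rfl)))
  obtain ⟨hzU, hzn⟩ := mem_inter.1 hz
  obtain ⟨i, hi, hzi⟩ := mem_biUnion.1 hzU
  have hi : i < n := mem_range.1 hi
  by_cases hadj : i + 1 = n
  · exact mem_union_left _ (mem_inter.2 ⟨(show i = n - 1 by omega) ▸ hzi, hzn⟩)
  by_cases hzero : i = 0
  · exact mem_union_right _ (mem_inter.2 ⟨hzero ▸ hzi, hzn⟩)
  · have := hempty i n hi le_rfl hadj (absurd · hzero)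
    exact absurd (mem_inter.2 ⟨hzi, hzn⟩) (this ▸ notMem_empty z)

end Chains

namespace Strictly1Balanced

open SimpleGraph

variable {r : ℕ} {F : SimpleGraph (Fin r)} {V : Type*} [DecidableEq V]

/-- Gluing loses at most one unit of rank, paid by the margin of the copy `c n` that `U` does
not fill; when `U` has no edge in `c n`, the other copies form a path and nothing is lost. -/
theorem card_lt_of_glued_copies (hF : Strictly1Balanced F) (hr : 3 ≤ r) {n : ℕ}
    {c : ℕ → FEdge V} (hc : ∀ i ≤ n, (c i).IsCopyOf F)
    (hpath : ∀ m < n, #((range m).biUnion (fun i => (c i).1) ∩ (c m).1) ≤ 1)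
    (hlast : #((range n).biUnion (fun i => (c i).1) ∩ (c n).1) ≤ 2)
    {U : Finset (Sym2 V)} (hU : U ⊆ (range (n + 1)).biUnion fun i => (c i).2)
    (hfull : U ∩ (c n).2 ≠ (c n).2) :
    (#U : ℝ) < d1 F * ((fromEdgeSet (U : Set (Sym2 V))).rankOn
      ((range (n + 1)).biUnion fun i => (c i).1) + 1) := by
  set H := fromEdgeSet (U : Set (Sym2 V))
  set P := (range n).biUnion fun i => (c i).1
  set ρ := H.rankOn ((range (n + 1)).biUnion fun i => (c i).1)
  have hd : 0 < d1 F := one_pos.trans <| hF.one_lt_d1 hr <| (hc n le_rfl).edgeSet_nonempty <|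
    nonempty_iff_ne_empty.2 fun h => hfull (by simp [h])
  have hsplit : ((range (n + 1)).biUnion fun i => (c i).1) = P ∪ (c n).1 := by
    rw [range_add_one, biUnion_insert, union_comm]
  have hcard : (#U : ℝ) ≤ ∑ i ∈ range n, (#(U ∩ (c i).2) : ℝ) + #(U ∩ (c n).2) := by
    have hUeq : U = (range (n + 1)).biUnion fun i => U ∩ (c i).2 := by
      rw [← inter_biUnion, inter_eq_left.2 hU]
    rw [← sum_range_succ (fun i => (#(U ∩ (c i).2) : ℝ)), ← Nat.cast_sum]
    exact_mod_cast hUeq ▸ card_biUnion_le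
  have hprefix : ∑ i ∈ range n, (#(U ∩ (c i).2) : ℝ) ≤ d1 F * H.rankOn P := by
    calc _ ≤ ∑ i ∈ range n, d1 F * (H.rankOn (c i).1 : ℝ) :=
          sum_le_sum fun i hi => (hc i (mem_range.1 hi).le).card_inter_le_rankOn hF (by omega) U
      _ ≤ d1 F * H.rankOn P := by
          rw [← mul_sum]
          gcongr
          exact_mod_cast sum_rankOn_le_rankOn_biUnion _ n hpath
  rcases (U ∩ (c n).2).eq_empty_or_nonempty with hemp | hne
  · have hmono : (H.rankOn P : ℝ) ≤ ρ := by
      exact_mod_cast rankOn_mono (hsplit ▸ subset_union_left)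
    rw [hemp, card_empty, Nat.cast_zero, add_zero] at hcard
    calc (#U : ℝ) ≤ d1 F * H.rankOn P := hcard.trans hprefix
      _ < d1 F * (ρ + 1) := by gcongr; linarith
  · have hglue : (H.rankOn P : ℝ) + H.rankOn (c n).1 ≤ ρ + 1 := by
      have := rankOn_add_rankOn_le_union_add_one (le_refl H) (le_refl H) hlast
      rw [← hsplit] at this
      exact_mod_cast this
    have hmargin := (hc n le_rfl).card_inter_add_le_rankOn hF (by omega) hne hfull
    have hr' : (0 : ℝ) < 1 / ((r : ℝ) - 1) := by
      have : (3 : ℝ) ≤ r := by exact_mod_cast hr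
      exact one_div_pos.2 (by linarith)
    have := mul_le_mul_of_nonneg_left hglue hd.le
    linarith

theorem card_lt_of_two_copies (hF : Strictly1Balanced F) (hr : 3 ≤ r) {a b : FEdge V}
    (ha : a.IsCopyOf F) (hb : b.IsCopyOf F) (hover : #(a.1 ∩ b.1) ≤ 2)
    {U : Finset (Sym2 V)} (hU : U ⊆ a.2 ∪ b.2) (hfull : U ∩ b.2 ≠ b.2) :
    (#U : ℝ) < d1 F * ((fromEdgeSet (U : Set (Sym2 V))).rankOn (a.1 ∪ b.1) + 1) := by
  have key := hF.card_lt_of_glued_copies hr (n := 1) (c := fun i => if i = 0 then a else b)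
    (fun i _ => by split_ifs <;> assumption) (fun m hm => by simp [Nat.lt_one_iff.1 hm])
    (by simpa using hover) (U := U) (by simpa [range_add_one, union_comm] using hU)
    (by simpa using hfull)
  simpa [range_add_one, union_comm] using key

theorem card_lt_of_cycle (hF : Strictly1Balanced F) (hr : 3 ≤ r) {k : ℕ} (hk : 3 ≤ k)
    {h : Fin k → FEdge V} (hc : ∀ i, (h i).IsCopyOf F) {v : Fin k → V}
    (hcons : ∀ i j : Fin k, ((i : ℕ) + 1) % k = (j : ℕ) → (h i).1 ∩ (h j).1 = {v i})
    (hfar : ∀ i j : Fin k, i ≠ j → ((i : ℕ) + 1) % k ≠ (j : ℕ) → ((j : ℕ) + 1) % k ≠ (i : ℕ) →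
      (h i).1 ∩ (h j).1 = ∅)
    {U : Finset (Sym2 V)} (hU : U ⊆ univ.biUnion fun i => (h i).2) {j : Fin k}
    (hfull : U ∩ (h j).2 ≠ (h j).2) :
    (#U : ℝ) <
      d1 F * ((fromEdgeSet (U : Set (Sym2 V))).rankOn (univ.biUnion fun i => (h i).1) + 1) := by
  obtain ⟨n, rfl⟩ : ∃ n, k = n + 1 := ⟨k - 1, by omega⟩
  set c := fun m => h (cycleIndex j m)
  have hle : ∀ a b, a < b → b ≤ n → #((c a).1 ∩ (c b).1) ≤ 1 := by
    intro a b hab hb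
    by_cases h₁ : ((cycleIndex j a : ℕ) + 1) % (n + 1) = cycleIndex j b
    · simp [c, hcons _ _ h₁]
    by_cases h₂ : ((cycleIndex j b : ℕ) + 1) % (n + 1) = cycleIndex j a
    · rw [inter_comm, hcons _ _ h₂, card_singleton]
    have hne : cycleIndex j a ≠ cycleIndex j b := fun heq => by
      have := (cycleIndex_eq_iff j).1 heq
      rw [Nat.mod_eq_of_lt (by omega), Nat.mod_eq_of_lt (by omega)] at this
      omega
    simp [c, hfar _ _ hne h₁ h₂]
  have hempty : ∀ a b, a < b → b ≤ n → a + 1 ≠ b → (a = 0 → b ≠ n) → (c a).1 ∩ (c b).1 = ∅ := by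
    intro a b hab hb hadj hwrap
    obtain ⟨h₁, h₂, h₃⟩ := cycleIndex_far j hab (by omega) hadj fun ha => by
      have := hwrap ha
      omega
    exact hfar _ _ h₁ h₂ h₃
  have hjn : cycleIndex j n = j := by simpa using cycleIndex_sub_one j
  have key := hF.card_lt_of_glued_copies hr (c := c) (fun i _ => hc _)
    (fun m hm => card_biUnion_range_inter_le_one hle hempty hm)
    (card_biUnion_range_inter_le_two hle hempty) (U := U)
    (by rwa [biUnion_range_cycleIndex j fun i => (h i).2]) (by simpa [c, hjn] using hfull)
  rwa [biUnion_range_cycleIndex j fun i => (h i).1] at key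

theorem card_add_one_le_of_sparse (hF : Strictly1Balanced F) (hr : 3 ≤ r) {h₁ h₂ : FEdge V}
    (hc₁ : h₁.IsCopyOf F) (hc₂ : h₂.IsCopyOf F) {x y : V} (hover : h₁.1 ∩ h₂.1 = {x, y})
    (he₁ : s(x, y) ∈ h₁.2) (he₂ : s(x, y) ∈ h₂.2) {U : Finset (Sym2 V)}
    (hU : U ⊆ h₁.2 ∪ h₂.2) :
    (#U : ℝ) + 1 ≤ d1 F * ((fromEdgeSet (U : Set (Sym2 V))).rankOn (h₁.1 ∪ h₂.1) + 1) ∧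
      (U ≠ h₁.2 ∪ h₂.2 →
        (#U : ℝ) + 1 < d1 F * ((fromEdgeSet (U : Set (Sym2 V))).rankOn (h₁.1 ∪ h₂.1) + 1)) := by
  set H := fromEdgeSet (U : Set (Sym2 V))
  set ρ := H.rankOn (h₁.1 ∪ h₂.1)
  set u₁ := U ∩ h₁.2
  set u₂ := U ∩ h₂.2
  set ρ₁ := (fromEdgeSet (u₁ : Set (Sym2 V))).rankOn h₁.1
  set ρ₂ := (fromEdgeSet (u₂ : Set (Sym2 V))).rankOn h₂.1
  have hd : 1 < d1 F := hF.one_lt_d1 hr (hc₁.edgeSet_nonempty ⟨_, he₁⟩)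
  have hUeq : U = u₁ ∪ u₂ := by rw [← inter_union_distrib_left, inter_eq_left.2 hU]
  have hcard : (#U : ℝ) + #(u₁ ∩ u₂) = #u₁ + #u₂ := by
    rw [hUeq]
    exact_mod_cast card_union_add_card_inter u₁ u₂
  have hle₁ : fromEdgeSet (u₁ : Set (Sym2 V)) ≤ H :=
    fromEdgeSet_mono (coe_subset.2 inter_subset_left)
  have hle₂ : fromEdgeSet (u₂ : Set (Sym2 V)) ≤ H :=
    fromEdgeSet_mono (coe_subset.2 inter_subset_left)
  have hloss : (ρ₁ : ℝ) + ρ₂ ≤ ρ + 1 := by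
    exact_mod_cast rankOn_add_rankOn_le_union_add_one hle₁ hle₂ (hover ▸ card_le_two)
  have hnoloss : ¬(fromEdgeSet (u₁ : Set (Sym2 V))).Reachable x y ∨
      ¬(fromEdgeSet (u₂ : Set (Sym2 V))).Reachable x y → (ρ₁ : ℝ) + ρ₂ ≤ ρ := fun hR => by
    exact_mod_cast rankOn_add_rankOn_le_union hle₁ hle₂ hover hR
  have hb₁ := hc₁.card_le_rankOn hF (by omega) (inter_subset_right : u₁ ⊆ h₁.2)
  have hb₂ := hc₂.card_le_rankOn hF (by omega) (inter_subset_right : u₂ ⊆ h₂.2)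
  have hd₀ : 0 ≤ d1 F := d1_nonneg (by omega)
  have hmul := mul_le_mul_of_nonneg_left hloss hd₀
  have hr' : (0 : ℝ) < 1 / ((r : ℝ) - 1) := by
    have : (3 : ℝ) ≤ r := by exact_mod_cast hr
    exact one_div_pos.2 (by linarith)
  by_cases hxyU : s(x, y) ∈ U
  · have hinter : (1 : ℝ) ≤ #(u₁ ∩ u₂) := by
      exact_mod_cast card_pos.2
        ⟨_, mem_inter.2 ⟨mem_inter.2 ⟨hxyU, he₁⟩, mem_inter.2 ⟨hxyU, he₂⟩⟩⟩
    refine ⟨by linarith, fun hne => ?_⟩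
    have hnotfull : u₁ ≠ h₁.2 ∨ u₂ ≠ h₂.2 := by
      by_contra! hfull
      exact hne (by rw [hUeq, hfull.1, hfull.2])
    rcases hnotfull with hnf | hnf
    · linarith [hc₁.card_add_le_rankOn hF (by omega) inter_subset_right
        ⟨_, mem_inter.2 ⟨hxyU, he₁⟩⟩ hnf]
    · linarith [hc₂.card_add_le_rankOn hF (by omega) inter_subset_right
        ⟨_, mem_inter.2 ⟨hxyU, he₂⟩⟩ hnf]
  · suffices (#U : ℝ) + 1 < d1 F * (ρ + 1) from ⟨this.le, fun _ => this⟩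
    have hinter : (0 : ℝ) ≤ #(u₁ ∩ u₂) := Nat.cast_nonneg _
    by_cases hR : (fromEdgeSet (u₁ : Set (Sym2 V))).Reachable x y ∧
        (fromEdgeSet (u₂ : Set (Sym2 V))).Reachable x y
    · linarith [hc₁.card_add_one_le_rankOn hF (by omega) inter_subset_right he₁
          (fun h => hxyU (mem_inter.1 h).1) hR.1,
        hc₂.card_add_one_le_rankOn hF (by omega) inter_subset_right he₂
          (fun h => hxyU (mem_inter.1 h).1) hR.2]
    · linarith [mul_le_mul_of_nonneg_left (hnoloss (not_and_or.1 hR)) hd₀]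

end Strictly1Balanced

section CleanCycles

open SimpleGraph

variable {r : ℕ} {F : SimpleGraph (Fin r)} {V : Type*} [DecidableEq V] {C : FGraph V}

lemma FGraph.Wf.mem_fst_of_mem_shadowEdges (hwf : C.Wf F) {e : Sym2 V}
    (he : e ∈ shadowEdges C) {a : V} (ha : a ∈ e) : a ∈ C.1 := by
  obtain ⟨h, hh, heh⟩ := mem_sup.1 he
  exact (hwf h hh).2 ((hwf h hh).1.mem_fst heh ha)

theorem IsCleanCycleOfLen.card_lt (hF : Strictly1Balanced F) (hr : 3 ≤ r) {k : ℕ}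
    (hC : IsCleanCycleOfLen F C k) {U : Finset (Sym2 V)} (hU : U ⊂ shadowEdges C) :
    (#U : ℝ) < d1 F * ((fromEdgeSet (U : Set (Sym2 V))).rankOn C.1 + 1) := by
  obtain ⟨hwf, hC1, hshape⟩ := hC
  have hcopy : ∀ h ∈ C.2, h.IsCopyOf F := fun h hh => (hwf h hh).1
  have hnotfull : ∃ h ∈ C.2, U ∩ h.2 ≠ h.2 := by
    by_contra! hfull
    refine hU.2 fun e he => ?_
    obtain ⟨h, hh, heh⟩ := mem_sup.1 he
    exact (inter_subset_left : U ∩ h.2 ⊆ U) ((hfull h hh).symm ▸ heh)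
  have hUsub : U ⊆ shadowEdges C := hU.1
  rw [shadowEdges] at hUsub
  rw [hC1]
  rcases hshape with ⟨-, h₁, h₂, -, hC2, hover⟩ | ⟨hk, h, -, hC2, v, -, hcons, hfar⟩
  · rw [hC2, sup_insert, sup_singleton, sup_eq_union] at hUsub ⊢
    rw [hC2] at hcopy hnotfull
    obtain ⟨hc₁, hc₂⟩ := (forall_mem_insert _ _ _).1 hcopy
    obtain ⟨hj, hjmem, hfull⟩ := hnotfull
    rcases mem_insert.1 hjmem with hj₁ | hj₂
    · rw [hj₁] at hfull
      rw [union_comm]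
      exact hF.card_lt_of_two_copies hr (hc₂ h₂ (mem_singleton_self _)) hc₁
        (by rw [inter_comm, hover]) (union_comm h₁.2 h₂.2 ▸ hUsub) hfull
    · rw [mem_singleton.1 hj₂] at hfull
      exact hF.card_lt_of_two_copies hr hc₁ (hc₂ h₂ (mem_singleton_self _)) hover.le hUsub hfull
  · rw [hC2, sup_image, sup_eq_biUnion] at hUsub ⊢
    rw [hC2] at hcopy hnotfull
    obtain ⟨_, hj, hfull⟩ := hnotfull
    obtain ⟨j, -, rfl⟩ := mem_image.1 hj
    exact hF.card_lt_of_cycle hr hk (fun i => hcopy _ (mem_image_of_mem _ (mem_univ i)))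
      hcons hfar hUsub hfull

theorem IsSparse.card_add_one_le (hF : Strictly1Balanced F) (hr : 3 ≤ r) (hsp : IsSparse F C)
    {U : Finset (Sym2 V)} (hU : U ⊆ shadowEdges C) :
    (#U : ℝ) + 1 ≤ d1 F * ((fromEdgeSet (U : Set (Sym2 V))).rankOn C.1 + 1) ∧
      (U ≠ shadowEdges C →
        (#U : ℝ) + 1 < d1 F * ((fromEdgeSet (U : Set (Sym2 V))).rankOn C.1 + 1)) := by
  obtain ⟨⟨hwf, hC1, -⟩, h₁, h₂, -, hC2, x, y, -, hover, he₁, he₂⟩ := hsp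
  have hshadow : shadowEdges C = h₁.2 ∪ h₂.2 := by
    rw [shadowEdges, hC2, sup_insert, sup_singleton, sup_eq_union]
  rw [hC1, hC2, sup_insert, sup_singleton, sup_eq_union, hshadow]
  rw [hshadow] at hU
  exact hF.card_add_one_le_of_sparse hr (hwf h₁ (by simp [hC2])).1 (hwf h₂ (by simp [hC2])).1
    hover he₁ he₂ hU

end CleanCycles

theorem dcycle_proper_sub_edge_bound_general {r : ℕ} (hr : 3 ≤ r) (F : SimpleGraph (Fin r))
    (hF : Strictly1Balanced F) {V : Type*} [DecidableEq V]
    (C : FGraph V) (k : ℕ) (hC : IsCleanCycleOfLen F C k)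
    (G : DGraph V) (hG : IsCleanDCycleOf F G C)
    (U' : Finset (Sym2 V)) (D' : Finset (FGraph V))
    (hU : U' ⊆ G.2.1) (hD : D' ⊆ G.2.2)
    (hproper : U'.card + D'.card < G.2.1.card + G.2.2.card) :
    ((U'.card : ℝ) + (D'.card : ℝ))
      < d1 F * ((G.1.card : ℝ)
        - (Nat.card ((SimpleGraph.fromEdgeSet (↑U' : Set (Sym2 V))).induce
            (↑G.1 : Set V)).ConnectedComponent : ℝ) + 1) := by
  obtain ⟨hG1, hG21⟩ : G.1 = C.1 ∧ G.2.1 = shadowEdges C := by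
    rcases hG with ⟨-, -, rfl⟩ | ⟨-, rfl⟩ <;> exact ⟨rfl, rfl⟩
  rw [hG21] at hU hproper
  rw [hG1, SimpleGraph.card_connectedComponent_induce fun a b hab _ =>
    hC.1.mem_fst_of_mem_shadowEdges (hU ((SimpleGraph.fromEdgeSet_adj _).1 hab).1)
      (Sym2.mem_mk_right a b)]
  suffices (#U' : ℝ) + #D' < d1 F * ((SimpleGraph.fromEdgeSet (U' : Set (Sym2 V))).rankOn C.1 + 1)
    by simpa only [SimpleGraph.rankOn, Int.cast_sub, Int.cast_natCast] using this
  rcases hG with ⟨-, -, rfl⟩ | ⟨hsp, rfl⟩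
  · obtain rfl : D' = ∅ := subset_empty.1 hD
    simp only [card_empty, add_zero, Nat.cast_zero] at hproper ⊢
    exact hC.card_lt hF hr (ssubset_of_subset_of_ne hU (by rintro rfl; omega))
  · obtain ⟨hle, hlt⟩ := hsp.card_add_one_le hF hr hU
    have hD1 : #D' ≤ 1 := (card_le_card hD).trans (card_singleton C).le
    simp only [card_singleton] at hproper
    by_cases hfull : U' = shadowEdges C
    · have hD0 : (#D' : ℝ) = 0 := by
        rw [hfull] at hproper
        exact_mod_cast (by omega : #D' = 0)
      linarith
    · have : (#D' : ℝ) ≤ 1 := by exact_mod_cast hD1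
      linarith [hlt hfull]

/-- Let `G` be the clean d-cycle corresponding to a clean `F`-cycle `C` of
length `k ≥ 2` (so `v(G) = k(r-1)` and `e(G) = k·e(F)`). Then every sub-d-graph `S` of `G`
on the full vertex set whose edge set is a proper subset of that of `G` satisfies
`e(S) < d₁(F)·(v(S) - c(S) + 1)`. -/
theorem dcycle_proper_sub_edge_bound {r : ℕ} (hr : 3 ≤ r) (F : SimpleGraph (Fin r))
    (hF : Strictly1Balanced F) {V : Type*} [DecidableEq V]
    (C : FGraph V) (k : ℕ) (hk : 2 ≤ k) (hC : IsCleanCycleOfLen F C k)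
    (G : DGraph V) (hG : IsCleanDCycleOf F G C)
    (U' : Finset (Sym2 V)) (D' : Finset (FGraph V))
    (hU : U' ⊆ G.2.1) (hD : D' ⊆ G.2.2)
    (hproper : U'.card + D'.card < G.2.1.card + G.2.2.card) :
    ((U'.card : ℝ) + (D'.card : ℝ))
      < d1 F * ((G.1.card : ℝ)
        - (Nat.card ((SimpleGraph.fromEdgeSet (↑U' : Set (Sym2 V))).induce
            (↑G.1 : Set V)).ConnectedComponent : ℝ) + 1) :=
  dcycle_proper_sub_edge_bound_general hr F hF C k hC G hG U' D' hU hD hproper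

end
end

section
/- Let F be a graph on r vertices, let H_1 and H_2 be connected F-graphs, and let v be a common vertex of H_1 and H_2 such that no F-edge incident to v belongs to both H_1 and H_2. Let H_2' be the F-graph obtained from H_2 by replacing v with an entirely new vertex not occurring in H_1 or H_2. Then n(H_1 ∪ H_2') = n(H_1 ∪ H_2) if v is the only common vertex of H_1 and H_2, and n(H_1 ∪ H_2') = n(H_1 ∪ H_2) − 1 if H_1 and H_2 have at least two common vertices. -/
open scoped Classical
open Filter Asymptotics

noncomputable section

/-! On the vertices of `H₂` the renaming `ρ` agrees with the transposition `(v w)`, so `H₂'` is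
an isomorphic copy of `H₂`: it is connected and has as many vertices and `F`-edges as `H₂`.
Since no `F`-edge through `v` is shared, `H₁` and `H₂'` share exactly the `F`-edges that `H₁` and
`H₂` share, so `e(H₁ ∪ H₂') = e(H₁ ∪ H₂)`; they share the same vertices except `v`, so
`v(H₁ ∪ H₂') = v(H₁ ∪ H₂) + 1`. Finally `H₁ ∪ H₂` is connected, and `H₁ ∪ H₂'` is connected if
`H₁, H₂` have a second common vertex and has two components (`H₁` and `H₂'`) otherwise. -/

section

variable {r : ℕ} {F : SimpleGraph (Fin r)} {V W : Type*}

namespace FEdge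

theorem IsCopyOf.mem_of_mem_edge {h : FEdge V} (hc : h.IsCopyOf F) {e : Sym2 V} (he : e ∈ h.2)
    {x : V} (hx : x ∈ e) : x ∈ h.1 := by
  obtain ⟨φ, -, h1, h2⟩ := hc
  obtain ⟨e₀, -, rfl⟩ : e ∈ Sym2.map φ '' F.edgeSet := h2 ▸ Finset.mem_coe.mpr he
  obtain ⟨y, -, rfl⟩ := Sym2.mem_map.mp hx
  exact Finset.mem_coe.mp (h1 ▸ Set.mem_range_self y)

theorem IsCopyOf.map [DecidableEq W] {h : FEdge V} (hc : h.IsCopyOf F) {f : V → W}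
    (hf : Set.InjOn f h.1) : (h.map f).IsCopyOf F := by
  obtain ⟨φ, hφ, h1, h2⟩ := hc
  have hφh : ∀ a, φ a ∈ (h.1 : Set V) := fun a => h1 ▸ Set.mem_range_self a
  refine ⟨f ∘ φ, fun a b hab => hφ (hf (hφh a) (hφh b) hab), ?_, ?_⟩
  · rw [FEdge.map, Finset.coe_image, h1, Set.range_comp]
  · rw [FEdge.map, Finset.coe_image, h2, ← Set.image_comp, ← Sym2.map_comp]

theorem IsCopyOf.map_congr [DecidableEq W] {h : FEdge V} (hc : h.IsCopyOf F) {f g : V → W}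
    (hfg : ∀ x ∈ h.1, f x = g x) : h.map f = h.map g :=
  Prod.ext (Finset.image_congr hfg) (Finset.image_congr fun _ he =>
    Sym2.map_congr fun _ hx => hfg _ (hc.mem_of_mem_edge he hx))

theorem IsCopyOf.map_eq_self [DecidableEq V] {h : FEdge V} (hc : h.IsCopyOf F) {f : V → V}
    (hf : ∀ x ∈ h.1, f x = x) : h.map f = h := by
  rw [hc.map_congr (g := id) hf]
  simp [FEdge.map, Sym2.map_id]

theorem map_injective [DecidableEq W] {f : V → W} (hf : Function.Injective f) :
    Function.Injective (FEdge.map f) :=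
  Prod.map_injective.mpr
    ⟨Finset.image_injective hf, Finset.image_injective (Sym2.map.injective hf)⟩

end FEdge

theorem shadowEdges_union [DecidableEq V] (H K : FGraph V) :
    shadowEdges (H.union K) = shadowEdges H ∪ shadowEdges K :=
  Finset.sup_union

theorem shadowEdges_map [DecidableEq V] [DecidableEq W] (f : V → W) (H : FGraph V) :
    shadowEdges (H.map f) = (shadowEdges H).image (Sym2.map f) := by
  rw [shadowEdges, FGraph.map, Finset.sup_image, shadowEdges,
    Finset.apply_sup_eq_sup_comp (Finset.image (Sym2.map f)) Finset.image_union rfl]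
  rfl

theorem shadow_le_shadow_union_left [DecidableEq V] (H K : FGraph V) :
    shadow H ≤ shadow (H.union K) :=
  SimpleGraph.fromEdgeSet_mono <| by simp [shadowEdges_union]

theorem shadow_le_shadow_union_right [DecidableEq V] (H K : FGraph V) :
    shadow K ≤ shadow (H.union K) :=
  SimpleGraph.fromEdgeSet_mono <| by simp [shadowEdges_union]

namespace FGraph

theorem Wf.mem_of_mem_shadowEdges [DecidableEq V] {H : FGraph V} (hH : H.Wf F) {e : Sym2 V}
    (he : e ∈ shadowEdges H) {x : V} (hx : x ∈ e) : x ∈ H.1 := by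
  obtain ⟨h, hh, he⟩ := Finset.mem_sup.mp he
  exact (hH h hh).2 ((hH h hh).1.mem_of_mem_edge he hx)

theorem Wf.map [DecidableEq V] [DecidableEq W] {H : FGraph V} (hH : H.Wf F) {f : V → W}
    (hf : Set.InjOn f H.1) : (H.map f).Wf F := by
  intro h hh
  obtain ⟨g, hg, rfl⟩ := Finset.mem_image.mp hh
  obtain ⟨hcopy, hsub⟩ := hH g hg
  exact ⟨hcopy.map (hf.mono hsub), Finset.image_subset_image hsub⟩

theorem Wf.map_congr [DecidableEq V] [DecidableEq W] {H : FGraph V} (hH : H.Wf F) {f g : V → W}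
    (hfg : ∀ x ∈ H.1, f x = g x) : H.map f = H.map g :=
  Prod.ext (Finset.image_congr hfg) (Finset.image_congr fun h hh =>
    (hH h hh).1.map_congr fun x hx => hfg x ((hH h hh).2 hx))

end FGraph

theorem SimpleGraph.Connected.natCard_connectedComponent_eq_one {G : SimpleGraph V}
    (hG : G.Connected) : Nat.card G.ConnectedComponent = 1 :=
  Nat.card_eq_one_iff_unique.mpr
    ⟨hG.preconnected.subsingleton_connectedComponent, hG.nonempty.map G.connectedComponentMk⟩

theorem SimpleGraph.natCard_connectedComponent_induce_union_eq_two {G : SimpleGraph V}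
    {s t : Set V} (hs : (G.induce s).Connected) (ht : (G.induce t).Connected)
    (hst : Disjoint s t) (hcut : ∀ x ∈ s, ∀ y ∈ t, ¬G.Adj x y) :
    Nat.card (G.induce (s ∪ t)).ConnectedComponent = 2 := by
  set K := G.induce (s ∪ t)
  have hmem_iff : ∀ {x y : ↑(s ∪ t)}, K.Reachable x y → ((x : V) ∈ s ↔ (y : V) ∈ s) := by
    intro x y ⟨p⟩
    induction p with
    | nil => rfl
    | @cons x y _ hxy _ ih =>
      refine Iff.trans ?_ ih
      rcases x.2 with hx | hx <;> rcases y.2 with hy | hy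
      · exact iff_of_true hx hy
      · exact absurd hxy (hcut x hx y hy)
      · exact absurd hxy.symm (hcut y hy x hx)
      · exact iff_of_false (Set.disjoint_right.mp hst hx) (Set.disjoint_right.mp hst hy)
  have hreach : ∀ {u : Set V}, (G.induce u).Connected → ∀ hu : u ⊆ s ∪ t,
      ∀ {x y : ↑(s ∪ t)}, (x : V) ∈ u → (y : V) ∈ u → K.Reachable x y := fun hu hsub x y hx hy =>
    (hu.preconnected ⟨x, hx⟩ ⟨y, hy⟩).map
      (SimpleGraph.induceHom SimpleGraph.Hom.id fun _ h => hsub h)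
  obtain ⟨a, ha⟩ := hs.nonempty
  obtain ⟨b, hb⟩ := ht.nonempty
  refine Nat.card_eq_two_iff.mpr ⟨K.connectedComponentMk ⟨a, .inl ha⟩,
    K.connectedComponentMk ⟨b, .inr hb⟩, fun hab => ?_, ?_⟩
  · exact Set.disjoint_left.mp hst ((hmem_iff (SimpleGraph.ConnectedComponent.exact hab)).mp ha) hb
  · refine Set.eq_univ_of_forall fun c => c.ind fun x => ?_
    rcases x.2 with hx | hx
    · exact .inl (SimpleGraph.ConnectedComponent.sound (hreach hs Set.subset_union_left hx ha))
    · exact .inr (SimpleGraph.ConnectedComponent.sound (hreach ht Set.subset_union_right hx hb))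

theorem FGraphConnected.compCount_eq_one [DecidableEq V] {H : FGraph V} (hH : FGraphConnected H) :
    compCount H = 1 :=
  SimpleGraph.Connected.natCard_connectedComponent_eq_one hH

theorem FGraphConnected.induce_shadow_mono [DecidableEq V] {H K : FGraph V}
    (hH : FGraphConnected H) (hHK : shadow H ≤ shadow K) :
    ((shadow K).induce (H.1 : Set V)).Connected :=
  SimpleGraph.Connected.mono (G := (shadow H).induce (H.1 : Set V)) (fun _ _ h => hHK h) hH

theorem FGraphConnected.union [DecidableEq V] {H K : FGraph V} (hH : FGraphConnected H)
    (hK : FGraphConnected K) {x : V} (hxH : x ∈ H.1) (hxK : x ∈ K.1) :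
    FGraphConnected (H.union K) := by
  rw [FGraphConnected, FGraph.union, Finset.coe_union]
  exact SimpleGraph.induce_union_connected
    (hH.induce_shadow_mono (shadow_le_shadow_union_left H K)).preconnected
    (hK.induce_shadow_mono (shadow_le_shadow_union_right H K)).preconnected ⟨x, hxH, hxK⟩

theorem FGraphConnected.map [DecidableEq V] [DecidableEq W] {H : FGraph V}
    (hH : FGraphConnected H) {f : V → W} (hf : Set.InjOn f H.1) :
    FGraphConnected (H.map f) := by
  let φ : (shadow H).induce (H.1 : Set V) →g (shadow (H.map f)).induce ((H.map f).1 : Set W) :=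
    { toFun x := ⟨f x, Finset.mem_image_of_mem f x.2⟩
      map_rel' {x y} hxy := by
        obtain ⟨he, hne⟩ := (SimpleGraph.fromEdgeSet_adj _).mp hxy
        refine (SimpleGraph.fromEdgeSet_adj _).mpr ⟨?_, fun h => hne (hf x.2 y.2 h)⟩
        rw [shadowEdges_map]
        exact Finset.mem_image_of_mem _ he }
  refine SimpleGraph.Connected.map φ ?_ hH
  rintro ⟨y, hy⟩
  obtain ⟨x, hx, rfl⟩ := Finset.mem_image.mp hy
  exact ⟨⟨x, hx⟩, rfl⟩

theorem compCount_union_eq_two [DecidableEq V] {H K : FGraph V} (hwH : H.Wf F) (hwK : K.Wf F)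
    (hH : FGraphConnected H) (hK : FGraphConnected K) (hHK : Disjoint H.1 K.1) :
    compCount (H.union K) = 2 := by
  rw [compCount, FGraph.union, Finset.coe_union]
  refine SimpleGraph.natCard_connectedComponent_induce_union_eq_two
    (hH.induce_shadow_mono (shadow_le_shadow_union_left H K))
    (hK.induce_shadow_mono (shadow_le_shadow_union_right H K))
    (Finset.disjoint_coe.mpr hHK) fun x hx y hy hxy => ?_
  obtain ⟨he, -⟩ := (SimpleGraph.fromEdgeSet_adj _).mp hxy
  rcases Finset.mem_union.mp (shadowEdges_union H K ▸ he) with he | he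
  · exact Finset.disjoint_left.mp hHK (hwH.mem_of_mem_shadowEdges he (Sym2.mem_mk_right x y)) hy
  · exact Finset.disjoint_left.mp hHK hx (hwK.mem_of_mem_shadowEdges he (Sym2.mem_mk_left x y))

section Swap

variable [DecidableEq V] {v w : V}

theorem Finset.inter_image_swap {s t : Finset V} (hws : w ∉ s) (hwt : w ∉ t) :
    s ∩ t.image (Equiv.swap v w) = (s ∩ t).erase v := by
  ext x
  simp only [Finset.mem_inter, Finset.mem_image, Finset.mem_erase]
  constructor
  · rintro ⟨hxs, y, hyt, rfl⟩
    have hyv : y ≠ v := by rintro rfl; exact hws (by simpa using hxs)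
    have hyw : y ≠ w := by rintro rfl; exact hwt hyt
    rw [Equiv.swap_apply_of_ne_of_ne hyv hyw] at hxs ⊢
    exact ⟨hyv, hxs, hyt⟩
  · rintro ⟨hxv, hxs, hxt⟩
    exact ⟨hxs, x, hxt, Equiv.swap_apply_of_ne_of_ne hxv (by rintro rfl; exact hws hxs)⟩

theorem Finset.card_union_image_swap {s t : Finset V} (hv : v ∈ s ∩ t) (hws : w ∉ s)
    (hwt : w ∉ t) : (s ∪ t.image (Equiv.swap v w)).card = (s ∪ t).card + 1 := by
  have hσ := Finset.card_union_add_card_inter s (t.image (Equiv.swap v w))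
  have hid := Finset.card_union_add_card_inter s t
  rw [Finset.inter_image_swap hws hwt, Finset.card_erase_of_mem hv,
    Finset.card_image_of_injective _ (Equiv.swap v w).injective] at hσ
  have := Finset.card_pos.mpr ⟨v, hv⟩
  omega

theorem FGraph.Wf.map_eq_map_swap {H : FGraph V} (hH : H.Wf F) (hw : w ∉ H.1) {ρ : V → V}
    (hρv : ρ v = w) (hρ : ∀ x, x ≠ v → ρ x = x) : H.map ρ = H.map (Equiv.swap v w) :=
  hH.map_congr fun x hx => by
    by_cases hxv : x = v
    · rw [hxv, hρv, Equiv.swap_apply_left]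
    · rw [hρ x hxv, Equiv.swap_apply_of_ne_of_ne hxv (by rintro rfl; exact hw hx)]

theorem FGraph.inter_edges_map_swap {H K : FGraph V} (hwH : H.Wf F) (hwK : K.Wf F)
    (hv : ∀ h ∈ H.2 ∩ K.2, v ∉ h.1) (hwH₁ : w ∉ H.1) (hwK₁ : w ∉ K.1) :
    H.2 ∩ (K.map (Equiv.swap v w)).2 = H.2 ∩ K.2 := by
  have hfix : ∀ h ∈ K.2, v ∉ h.1 → h.map (Equiv.swap v w) = h := fun h hh hvh =>
    (hwK h hh).1.map_eq_self fun x hx => Equiv.swap_apply_of_ne_of_ne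
      (by rintro rfl; exact hvh hx) (by rintro rfl; exact hwK₁ ((hwK h hh).2 hx))
  ext h
  simp only [FGraph.map, Finset.mem_inter, Finset.mem_image]
  constructor
  · rintro ⟨hH, g, hg, rfl⟩
    have hvg : v ∉ g.1 := fun hvg => hwH₁ ((hwH _ hH).2
      (Finset.mem_image.mpr ⟨v, hvg, Equiv.swap_apply_left v w⟩))
    rw [hfix g hg hvg] at hH ⊢
    exact ⟨hH, hg⟩
  · rintro ⟨hH, hK⟩
    exact ⟨hH, h, hK, hfix h hK (hv h (Finset.mem_inter.mpr ⟨hH, hK⟩))⟩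

theorem FGraph.card_edges_union_map_swap {H K : FGraph V} (hwH : H.Wf F) (hwK : K.Wf F)
    (hv : ∀ h ∈ H.2 ∩ K.2, v ∉ h.1) (hwH₁ : w ∉ H.1) (hwK₁ : w ∉ K.1) :
    (H.union (K.map (Equiv.swap v w))).2.card = (H.union K).2.card := by
  have hσ := Finset.card_union_add_card_inter H.2 (K.map (Equiv.swap v w)).2
  have hid := Finset.card_union_add_card_inter H.2 K.2
  have hK : (K.map (Equiv.swap v w)).2.card = K.2.card :=
    Finset.card_image_of_injective K.2 (FEdge.map_injective (Equiv.swap v w).injective)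
  rw [FGraph.inter_edges_map_swap hwH hwK hv hwH₁ hwK₁] at hσ
  exact (by omega : (H.2 ∪ (K.map (Equiv.swap v w)).2).card = (H.2 ∪ K.2).card)

end Swap

end

/-- Let `H₁, H₂` be connected `F`-graphs and `v` a common vertex such that
no `F`-edge incident to `v` belongs to both. Replacing `v` in `H₂` by a fresh vertex `w`
leaves the nullity of the union unchanged if `v` is the only common vertex, and decreases
it by one if there are at least two common vertices. -/
theorem nullity_split_vertex {r : ℕ} (F : SimpleGraph (Fin r)) {V : Type*} [DecidableEq V]
    (H₁ H₂ : FGraph V) (hw₁ : FGraph.Wf H₁ F) (hw₂ : FGraph.Wf H₂ F)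
    (hc₁ : FGraphConnected H₁) (hc₂ : FGraphConnected H₂)
    (v : V) (hv : v ∈ H₁.1 ∩ H₂.1)
    (hno : ∀ h ∈ H₁.2 ∩ H₂.2, v ∉ h.1)
    (w : V) (hw : w ∉ H₁.1 ∪ H₂.1)
    (ρ : V → V) (hρv : ρ v = w) (hρ : ∀ x, x ≠ v → ρ x = x) :
    (H₁.1 ∩ H₂.1 = {v} →
      nullity r (FGraph.union H₁ (FGraph.map ρ H₂)) = nullity r (FGraph.union H₁ H₂)) ∧
    (2 ≤ (H₁.1 ∩ H₂.1).card →
      nullity r (FGraph.union H₁ (FGraph.map ρ H₂))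
        = nullity r (FGraph.union H₁ H₂) - 1) := by
  obtain ⟨hv₁, hv₂⟩ := Finset.mem_inter.mp hv
  obtain ⟨hw₁', hw₂'⟩ := Finset.notMem_union.mp hw
  set σ := Equiv.swap v w
  rw [hw₂.map_eq_map_swap hw₂' hρv hρ]
  have hinter : H₁.1 ∩ (H₂.map σ).1 = (H₁.1 ∩ H₂.1).erase v :=
    Finset.inter_image_swap hw₁' hw₂'
  have hc₂σ : FGraphConnected (H₂.map σ) := hc₂.map σ.injective.injOn
  have hnullity : ∀ c, compCount (H₁.union (H₂.map σ)) = c →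
      nullity r (H₁.union (H₂.map σ)) = nullity r (H₁.union H₂) + c - 2 := by
    intro c hc
    have hV : (H₁.union (H₂.map σ)).1.card = (H₁.union H₂).1.card + 1 :=
      Finset.card_union_image_swap hv hw₁' hw₂'
    rw [nullity, nullity, hV, FGraph.card_edges_union_map_swap hw₁ hw₂ hno hw₁' hw₂', hc,
      (hc₁.union hc₂ hv₁ hv₂).compCount_eq_one]
    push_cast
    ring
  refine ⟨fun hsingle => ?_, fun htwo => ?_⟩
  · have hdisj : Disjoint H₁.1 (H₂.map σ).1 := by
      rw [Finset.disjoint_iff_inter_eq_empty, hinter, hsingle, Finset.erase_singleton]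
    rw [hnullity 2 (compCount_union_eq_two hw₁ (hw₂.map σ.injective.injOn) hc₁ hc₂σ hdisj)]
    ring
  · obtain ⟨u, hu, huv⟩ := Finset.exists_mem_ne htwo v
    obtain ⟨hu₁, hu₂⟩ := Finset.mem_inter.mp (hinter ▸ Finset.mem_erase.mpr ⟨huv, hu⟩)
    rw [hnullity 1 ((hc₁.union hc₂σ hu₁ hu₂).compCount_eq_one)]
    ring

end
end
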